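/- Sub-critical remainder R₀ vanishes: under the assumptions of the sub-critical CLT ((F), (H2) with α ∈ (0,1/√2), and 𝔣 = (f_ℓ) satisfying (H2) uniformly), for any nondecreasing sequence (p_n) of positive integers with p_n < n, p_n/n → 1 and n − p_n − λ log n → ∞ for all λ > 0, the quantity R₀(n) = |𝔾_n|^{-1/2} ∑_{k=0}^{n-p_n-1} M_{𝔾_k}(f̃_{n-k}) satisfies lim_{n→∞} E[R₀(n)²] = 0. -/

import Mathlib

open MeasureTheory ProbabilityTheory Filter Finset
open scoped NNReal Topology

noncomputable section

namespace BMC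

variable {S : Type*} [MeasurableSpace S] {Ω : Type*} [MeasurableSpace Ω]

/-- The `n`-th generation `𝔾_n` of the binary tree, as a finset of `List Bool`. -/
def gen (n : ℕ) : Finset (List Bool) :=
  (Finset.univ : Finset (Fin n → Bool)).image List.ofFn

/-- The tree `𝕋_n` up to generation `n`. -/
def treeUpTo (n : ℕ) : Finset (List Bool) :=
  (Finset.range (n + 1)).biUnion gen

/-- The descendants `i𝔾_m` of `i` that are `m` generations below `i`. -/
def desc (i : List Bool) (m : ℕ) : Finset (List Bool) :=
  (gen m).image fun j => i ++ j

/-- `M_A(f) = ∑_{i ∈ A} f(X_i)`. -/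
def MA (X : List Bool → Ω → S) (A : Finset (List Bool)) (f : S → ℝ) (ω : Ω) : ℝ :=
  ∑ i ∈ A, f (X i ω)

/-- Complex-valued version of `M_A(f)`. -/
def MAC (X : List Bool → Ω → S) (A : Finset (List Bool)) (f : S → ℂ) (ω : Ω) : ℂ :=
  ∑ i ∈ A, f (X i ω)

/-- `𝒫(f ⊗ g)(x) = ∫ f(y) g(z) 𝒫(x, dy, dz)`. -/
def Ptens (P : Kernel S (S × S)) (f g : S → ℝ) (x : S) : ℝ :=
  ∫ p, f p.1 * g p.2 ∂(P x)

/-- `𝒫(f ⊗_sym g)(x) = ∫ (f(y) g(z) + g(y) f(z))/2 𝒫(x, dy, dz)`. -/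
def PtensSym (P : Kernel S (S × S)) (f g : S → ℝ) (x : S) : ℝ :=
  ∫ p, (f p.1 * g p.2 + g p.1 * f p.2) / 2 ∂(P x)

/-- Complex version of `𝒫(f ⊗_sym g)`. -/
def PtensSymC (P : Kernel S (S × S)) (f g : S → ℂ) (x : S) : ℂ :=
  ∫ p, (f p.1 * g p.2 + g p.1 * f p.2) / 2 ∂(P x)

/-- The operator `𝒬 f (x) = ∫ (f(y)+f(z))/2 𝒫(x, dy, dz)`, i.e. the action of the
Markov kernel `𝒬 = (P₀ + P₁)/2` on functions. -/
def Qop (P : Kernel S (S × S)) (f : S → ℝ) (x : S) : ℝ :=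
  ∫ p, (f p.1 + f p.2) / 2 ∂(P x)

/-- The iterated operator `𝒬ⁿ`. -/
def Qiter (P : Kernel S (S × S)) (n : ℕ) (f : S → ℝ) : S → ℝ := (Qop P)^[n] f

/-- Complex version of `𝒬`. -/
def QopC (P : Kernel S (S × S)) (f : S → ℂ) (x : S) : ℂ :=
  ∫ p, (f p.1 + f p.2) / 2 ∂(P x)

/-- Complex version of `𝒬ⁿ`. -/
def QiterC (P : Kernel S (S × S)) (n : ℕ) (f : S → ℂ) : S → ℂ := (QopC P)^[n] f

/-- `⟨μ, f⟩ = ∫ f dμ`. -/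
def mInt (μ : Measure S) (f : S → ℝ) : ℝ := ∫ x, f x ∂μ

/-- Complex `⟨μ, f⟩`. -/
def mIntC (μ : Measure S) (f : S → ℂ) : ℂ := ∫ x, f x ∂μ

/-- `f̃ = f - ⟨μ, f⟩`. -/
def ctr (μ : Measure S) (f : S → ℝ) (x : S) : ℝ := f x - mInt μ f

/-- Coercion of a real function to a complex one. -/
def cf (f : S → ℝ) : S → ℂ := fun x => (f x : ℂ)

/-- The σ-field `ℋ_n = σ(X_j, j ∈ 𝕋_n)`. -/
def sigmaTree (X : List Bool → Ω → S) (n : ℕ) : MeasurableSpace Ω :=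
  ⨆ j ∈ treeUpTo n, MeasurableSpace.comap (X j) inferInstance

lemma treeUpTo_mono {a b : ℕ} (h : a ≤ b) : treeUpTo a ⊆ treeUpTo b := by
  intro i hi
  simp only [treeUpTo, Finset.mem_biUnion, Finset.mem_range] at hi ⊢
  obtain ⟨r, hr, hir⟩ := hi
  exact ⟨r, lt_of_lt_of_le hr (by omega), hir⟩

/-- The filtration `(ℋ_n = σ(X_i, i ∈ 𝕋_n))_{n ∈ ℕ}`. -/
def natFiltration (X : List Bool → Ω → S) (hX : ∀ i, Measurable (X i)) :
    Filtration ℕ (inferInstance : MeasurableSpace Ω) where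
  seq n := sigmaTree X n
  mono' := by
    intro a b hab
    exact biSup_mono fun j hj => treeUpTo_mono hab hj
  le' n := by
    refine iSup₂_le fun j _ => ?_
    exact (hX j).comap_le

/-- `X = (X_i, i ∈ 𝕋)` is a bifurcating Markov chain on `(S, 𝒮)` with initial
distribution `ν` and probability kernel `𝒫`, under the probability measure `m` on `Ω`. -/
structure IsBMC (P : Kernel S (S × S)) (ν : Measure S) (m : Measure Ω)
    (X : List Bool → Ω → S) : Prop where
  meas : ∀ i, Measurable (X i)
  init : m.map (X []) = ν
  branching : ∀ (n : ℕ) (g : List Bool → S → S × S → ℝ),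
    (∀ i, Measurable fun q : S × S × S => g i q.1 q.2) →
    (∀ i, ∃ C, ∀ x p, |g i x p| ≤ C) →
    (m[fun ω => ∏ i ∈ gen n, g i (X i ω) (X (i ++ [false]) ω, X (i ++ [true]) ω)
        | sigmaTree X n]
      =ᵐ[m] fun ω => ∏ i ∈ gen n, ∫ p, g i (X i ω) p ∂(P (X i ω)))

/-- Structural Assumption (F) on the set of functions `F`. -/
structure AssumpF (P : Kernel S (S × S)) (ν : Measure S) (F : Set (S → ℝ)) : Prop where
  meas : ∀ f ∈ F, Measurable f
  add_mem : ∀ f ∈ F, ∀ g ∈ F, f + g ∈ F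
  smul_mem : ∀ (c : ℝ), ∀ f ∈ F, c • f ∈ F
  const_mem : ∀ c : ℝ, (fun _ : S => c) ∈ F
  sq_mem : ∀ f ∈ F, (fun x => f x ^ 2) ∈ F
  int_nu : ∀ f ∈ F, Integrable f ν
  tens_int : ∀ f₀ ∈ F, ∀ f₁ ∈ F, ∀ x : S,
    Integrable (fun p : S × S => f₀ p.1 * f₁ p.2) (P x)
  tens_mem : ∀ f₀ ∈ F, ∀ f₁ ∈ F, Ptens P f₀ f₁ ∈ F

/-- Geometric ergodicity Assumption (H2) with rate `α`. -/
structure AssumpH2 (P : Kernel S (S × S)) (F : Set (S → ℝ)) (μ : Measure S) (α : ℝ) :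
    Prop where
  prob : IsProbabilityMeasure μ
  int_mu : ∀ f ∈ F, Integrable f μ
  erg : ∀ f ∈ F, ∃ g ∈ F, ∀ (n : ℕ) (x : S), |Qiter P n f x - mInt μ f| ≤ α ^ n * g x

/-- A sequence `𝔣` satisfies Assumption (H2) uniformly, with dominating function `g`. -/
def UnifH2 (P : Kernel S (S × S)) (μ : Measure S) (α : ℝ) (𝔣 : ℕ → S → ℝ) (g : S → ℝ) :
    Prop :=
  ∀ (n ℓ : ℕ) (x : S), |Qiter P n (𝔣 ℓ) x| ≤ g x ∧
    |Qiter P n (𝔣 ℓ) x - mInt μ (𝔣 ℓ)| ≤ α ^ n * g x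

/-- `N_{n,∅}(𝔣) = |𝔾_n|^{-1/2} ∑_{ℓ=0}^n M_{𝔾_{n-ℓ}}(f̃_ℓ)`. -/
def Nroot (μ : Measure S) (X : List Bool → Ω → S) (𝔣 : ℕ → S → ℝ) (n : ℕ) (ω : Ω) : ℝ :=
  (Real.sqrt (2 ^ n))⁻¹ * ∑ ℓ ∈ Finset.range (n + 1), MA X (gen (n - ℓ)) (ctr μ (𝔣 ℓ)) ω

/-- `N_{n,i}(𝔣) = |𝔾_n|^{-1/2} ∑_{ℓ=0}^{n-|i|} M_{i𝔾_{n-|i|-ℓ}}(f̃_ℓ)`. -/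
def Nni (μ : Measure S) (X : List Bool → Ω → S) (𝔣 : ℕ → S → ℝ) (n : ℕ) (i : List Bool)
    (ω : Ω) : ℝ :=
  (Real.sqrt (2 ^ n))⁻¹ *
    ∑ ℓ ∈ Finset.range (n - i.length + 1), MA X (desc i (n - i.length - ℓ)) (ctr μ (𝔣 ℓ)) ω

/-- Convergence in distribution to a centered Gaussian with variance `v`, expressed by
convergence of integrals of bounded continuous test functions. -/
def TendstoGauss (m : Measure Ω) (Y : ℕ → Ω → ℝ) (v : ℝ≥0) : Prop :=
  ∀ φ : BoundedContinuousFunction ℝ ℝ,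
    Tendsto (fun n => ∫ ω, φ (Y n ω) ∂m) atTop (𝓝 (∫ x, φ x ∂(gaussianReal 0 v)))

/-- Assumption (H3): a second spectral gap, with rate `α`, eigenvalues `(αj j)_{j ∈ J}`
of modulus `α`, projectors `R j`, and speed `β`. -/
structure AssumpH3 (P : Kernel S (S × S)) (F : Set (S → ℝ)) (μ : Measure S) (α : ℝ)
    {J : Type*} [Fintype J] [DecidableEq J] (αj : J → ℂ) (R : J → (S → ℂ) → S → ℂ) (β : ℕ → ℝ) :
    Prop where
  prob : IsProbabilityMeasure μ
  int_mu : ∀ f ∈ F, Integrable f μ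
  nonempty : Nonempty J
  inj : Function.Injective αj
  abs_eq : ∀ j, ‖αj j‖ = α
  Rlin : ∀ (j : J) (c : ℂ) (f g : S → ℂ),
    R j (fun x => c * f x + g x) = fun x => c * R j f x + R j g x
  Rorth : ∀ (j j' : J) (f : S → ℂ), R j (R j' f) = if j = j' then R j f else fun _ => 0
  Rne : ∀ j : J, ∃ f ∈ F, R j (cf f) ≠ fun _ => 0
  Rmeas : ∀ (j : J) (f : S → ℂ), Measurable f → Measurable (R j f)
  Reig : ∀ (j : J) (f : S → ℂ), QopC P (R j f) = fun x => αj j * R j f x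
  βpos : ∀ n, 0 < β n
  βle : ∀ n, β n ≤ 1
  βanti : Antitone β
  βlim : Tendsto β atTop (𝓝 0)
  erg : ∀ f ∈ F, ∃ g ∈ F, ∀ (n : ℕ) (x : S),
    ‖QiterC P n (cf f) x - (mInt μ f : ℂ)
      - (α : ℂ) ^ n * ∑ j, (αj j / (α : ℂ)) ^ n * R j (cf f) x‖ ≤ β n * α ^ n * g x

/-- `f̂ = f̃ - ∑_{j ∈ J} ℛ_j(f)`, as a complex-valued function. -/
def fhat {J : Type*} [Fintype J] (μ : Measure S) (R : J → (S → ℂ) → S → ℂ)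
    (f : S → ℝ) : S → ℂ :=
  fun x => (ctr μ f x : ℂ) - ∑ j, R j (cf f) x

/-- A sequence `𝔣` satisfies Assumption (H3) uniformly, with dominating function `g`. -/
def UnifH3 {J : Type*} [Fintype J] (P : Kernel S (S × S)) (μ : Measure S) (α : ℝ)
    (R : J → (S → ℂ) → S → ℂ) (β : ℕ → ℝ) (𝔣 : ℕ → S → ℝ) (g : S → ℝ) : Prop :=
  ∀ (n ℓ : ℕ) (x : S),
    ‖QiterC P n (cf (𝔣 ℓ)) x‖ ≤ g x ∧
    ‖QiterC P n (cf (ctr μ (𝔣 ℓ))) x‖ ≤ α ^ n * g x ∧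
    ‖QiterC P n (fhat μ R (𝔣 ℓ)) x‖ ≤ β n * α ^ n * g x

/-- `𝒫 f*_{k,ℓ}(x) = ∑_{j ∈ J} θ_j^{ℓ-k} 𝒫(ℛ_j(f_k) ⊗_sym ℛ̄_j(f_ℓ))(x)`, where
`ℛ̄_j(f) = conj (ℛ_j f)` for real `f`. -/
def Pfstar {J : Type*} [Fintype J] (P : Kernel S (S × S)) (α : ℝ) (αj : J → ℂ)
    (R : J → (S → ℂ) → S → ℂ) (𝔣 : ℕ → S → ℝ) (k ℓ : ℕ) (x : S) : ℂ :=
  ∑ j, (αj j / (α : ℂ)) ^ ((ℓ : ℤ) - (k : ℤ)) *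
    PtensSymC P (R j (cf (𝔣 k))) (fun y => starRingEnd ℂ (R j (cf (𝔣 ℓ)) y)) x

/-!
Split `R₀(n)` into its terms `f̃_{n-k}(X_i)`, `i ∈ 𝔾_k`, `k < K := n - p_n`. There are fewer
than `2^K` of them, so by Cauchy–Schwarz `R₀(n)² ≤ 2^{K-n} ∑ f̃_{n-k}(X_i)² ≤ 2^{K-n} ∑ g²(X_i)`.
The many-to-one formula `E[∑_{i ∈ 𝔾_k} h(X_i)] = 2^k ⟨ν, 𝒬^k h⟩`, together with the bound
`𝒬^k(g²) ≤ |⟨μ, g²⟩| + G`, where `G` is the function (H2) attaches to `g² ∈ F`, yields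
`E[R₀(n)²] ≤ C 4^K / 2^n` with `C = |⟨μ, g²⟩| + ⟨ν, G⟩`.
Since `p_n / n → 1`, eventually `4K ≤ n`, and the bound is at most `C 2^{-n/2}`.
-/

section Tree

lemma mem_gen {n : ℕ} {i : List Bool} : i ∈ gen n ↔ i.length = n := by
  constructor
  · intro hi
    obtain ⟨f, -, rfl⟩ := Finset.mem_image.mp hi
    simp
  · rintro rfl
    exact Finset.mem_image.mpr ⟨fun k => i.get k, Finset.mem_univ _, List.ofFn_get i⟩

lemma card_gen (n : ℕ) : #(gen n) = 2 ^ n := by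
  rw [gen, Finset.card_image_of_injective _ List.ofFn_injective, Finset.card_univ]
  simp

lemma gen_zero : gen 0 = {[]} := by
  ext j
  simp [mem_gen]

lemma sum_gen_succ {M : Type*} [AddCommMonoid M] (F : List Bool → M) (n : ℕ) :
    ∑ j ∈ gen (n + 1), F j = ∑ i ∈ gen n, (F (i ++ [false]) + F (i ++ [true])) := by
  have hgen : gen (n + 1) = (gen n ×ˢ (univ : Finset Bool)).image fun q => q.1 ++ [q.2] := by
    ext j
    simp only [mem_gen, Finset.mem_image, Finset.mem_product, Finset.mem_univ, and_true]
    constructor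
    · intro hj
      have hne : j ≠ [] := by rintro rfl; simp at hj
      exact ⟨(j.dropLast, j.getLast hne), by simp [hj], List.dropLast_append_getLast hne⟩
    · rintro ⟨⟨i, b⟩, hi, rfl⟩
      simp [hi]
  rw [hgen, Finset.sum_image, Finset.sum_product]
  · simp [add_comm]
  · rintro ⟨i₁, b₁⟩ - ⟨i₂, b₂⟩ - h
    obtain ⟨rfl, h⟩ := List.append_inj' h rfl
    simp_all

lemma sum_range_two_pow_le (K : ℕ) : ∑ k ∈ range K, (2 : ℝ) ^ k ≤ 2 ^ K := by
  exact_mod_cast (Nat.geomSum_lt le_rfl fun k hk => mem_range.mp hk).le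

lemma sq_sum_range_sum_gen_le (a : ℕ → List Bool → ℝ) (K : ℕ) :
    (∑ k ∈ range K, ∑ i ∈ gen k, a k i) ^ 2
      ≤ 2 ^ K * ∑ k ∈ range K, ∑ i ∈ gen k, a k i ^ 2 := by
  have hcard : (#((range K).sigma gen) : ℝ) ≤ 2 ^ K := by
    simpa [Finset.card_sigma, card_gen] using sum_range_two_pow_le K
  rw [Finset.sum_sigma', Finset.sum_sigma' (range K) gen fun k i => a k i ^ 2]
  exact (sq_sum_le_card_mul_sum_sq).trans
    (mul_le_mul_of_nonneg_right hcard (sum_nonneg fun _ _ => sq_nonneg _))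

end Tree

section Operator

variable {P : Kernel S (S × S)}

lemma Qop_mono {h₁ h₂ : S → ℝ}
    (hi₁ : ∀ x, Integrable (fun q : S × S => (h₁ q.1 + h₁ q.2) / 2) (P x))
    (hi₂ : ∀ x, Integrable (fun q : S × S => (h₂ q.1 + h₂ q.2) / 2) (P x))
    (hle : h₁ ≤ h₂) (x : S) : Qop P h₁ x ≤ Qop P h₂ x :=
  integral_mono (hi₁ x) (hi₂ x) fun q => by
    dsimp only
    linarith [hle q.1, hle q.2]

omit [MeasurableSpace S] in
lemma norm_half_add_le {h : S → ℝ} {C : ℝ} (hb : ∀ x, |h x| ≤ C) (q : S × S) :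
    ‖(h q.1 + h q.2) / 2‖ ≤ C := by
  rw [Real.norm_eq_abs, abs_div, abs_two]
  linarith [abs_add_le (h q.1) (h q.2), hb q.1, hb q.2]

variable [IsMarkovKernel P]

lemma measurable_Qop {h : S → ℝ} (hm : Measurable h) : Measurable (Qop P h) :=
  (((hm.comp (measurable_fst.comp measurable_snd)).add
    (hm.comp (measurable_snd.comp measurable_snd))).div_const 2).stronglyMeasurable
    |>.integral_kernel_prod_right' |>.measurable

lemma measurable_Qiter {h : S → ℝ} (hm : Measurable h) (k : ℕ) : Measurable (Qiter P k h) := by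
  induction k with
  | zero => exact hm
  | succ k ih => rw [Qiter, Function.iterate_succ_apply']; exact measurable_Qop ih

lemma integrable_half_add_of_abs_le {h : S → ℝ} (hm : Measurable h) {C : ℝ}
    (hb : ∀ x, |h x| ≤ C) (x : S) :
    Integrable (fun q : S × S => (h q.1 + h q.2) / 2) (P x) :=
  Integrable.of_bound
    (((hm.comp measurable_fst).add (hm.comp measurable_snd)).div_const 2).aestronglyMeasurable C
    (Eventually.of_forall (norm_half_add_le hb))

lemma abs_Qop_le {h : S → ℝ} {C : ℝ} (hb : ∀ x, |h x| ≤ C) (x : S) : |Qop P h x| ≤ C := by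
  simpa [Qop] using norm_integral_le_of_norm_le_const (μ := P x)
    (Eventually.of_forall (norm_half_add_le hb))

lemma abs_Qiter_le {h : S → ℝ} {C : ℝ} (hb : ∀ x, |h x| ≤ C) (k : ℕ) (x : S) :
    |Qiter P k h x| ≤ C := by
  induction k generalizing x with
  | zero => exact hb x
  | succ k ih => rw [Qiter, Function.iterate_succ_apply']; exact abs_Qop_le ih x

end Operator

namespace AssumpF

variable {P : Kernel S (S × S)} {ν : Measure S} {F : Set (S → ℝ)}

lemma integrable_half_add (hF : AssumpF P ν F) {f : S → ℝ} (hf : f ∈ F) (x : S) :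
    Integrable (fun q : S × S => (f q.1 + f q.2) / 2) (P x) := by
  have h₁ := hF.tens_int f hf _ (hF.const_mem 1) x
  have h₂ := hF.tens_int _ (hF.const_mem 1) f hf x
  convert (h₁.add h₂).div_const 2 using 2
  simp

lemma Qop_mem (hF : AssumpF P ν F) {f : S → ℝ} (hf : f ∈ F) : Qop P f ∈ F := by
  have hQ : Qop P f = (1 / 2 : ℝ) • (Ptens P f (fun _ => 1) + Ptens P (fun _ => 1) f) := by
    funext x
    simp only [Qop, Ptens, Pi.smul_apply, Pi.add_apply, smul_eq_mul, mul_one, one_mul]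
    rw [← integral_add (by simpa using hF.tens_int f hf _ (hF.const_mem 1) x)
      (by simpa using hF.tens_int _ (hF.const_mem 1) f hf x), ← integral_const_mul]
    simp only [one_div, inv_mul_eq_div]
  rw [hQ]
  exact hF.smul_mem _ _ (hF.add_mem _ (hF.tens_mem f hf _ (hF.const_mem 1)) _
    (hF.tens_mem _ (hF.const_mem 1) f hf))

lemma Qiter_mem (hF : AssumpF P ν F) {f : S → ℝ} (hf : f ∈ F) (k : ℕ) : Qiter P k f ∈ F := by
  induction k with
  | zero => exact hf
  | succ k ih => rw [Qiter, Function.iterate_succ_apply']; exact hF.Qop_mem ih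

lemma Qiter_le_Qiter [IsMarkovKernel P] (hF : AssumpF P ν F) {h f : S → ℝ} (hm : Measurable h)
    {C : ℝ} (hb : ∀ x, |h x| ≤ C) (hf : f ∈ F) (hle : h ≤ f) (k : ℕ) : Qiter P k h ≤ Qiter P k f := by
  induction k with
  | zero => exact hle
  | succ k ih =>
    simp only [Qiter, Function.iterate_succ_apply']
    exact Qop_mono (integrable_half_add_of_abs_le (measurable_Qiter hm k) (abs_Qiter_le hb k))
      (hF.integrable_half_add (hF.Qiter_mem hf k)) ih

end AssumpF

lemma AssumpH2.exists_integral_Qiter_le {P : Kernel S (S × S)} {ν : Measure S}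
    [IsProbabilityMeasure ν] {F : Set (S → ℝ)} {μ : Measure S} {α : ℝ}
    (hH2 : AssumpH2 P F μ α) (hF : AssumpF P ν F) (hα0 : 0 ≤ α) (hα1 : α ≤ 1)
    {h : S → ℝ} (hh : h ∈ F) : ∃ C, ∀ k, ∫ x, Qiter P k h x ∂ν ≤ C := by
  obtain ⟨G, hG, hGerg⟩ := hH2.erg h hh
  have hG0 : ∀ x, 0 ≤ G x := fun x => (abs_nonneg _).trans (by simpa using hGerg 0 x)
  refine ⟨|mInt μ h| + ∫ x, G x ∂ν, fun k => ?_⟩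
  have hpt : ∀ x, Qiter P k h x ≤ |mInt μ h| + G x := fun x => by
    have := (abs_le.mp (hGerg k x)).2
    have : α ^ k * G x ≤ G x := mul_le_of_le_one_left (hG0 x) (pow_le_one₀ hα0 hα1)
    linarith [le_abs_self (mInt μ h)]
  calc ∫ x, Qiter P k h x ∂ν ≤ ∫ x, (|mInt μ h| + G x) ∂ν :=
        integral_mono (hF.int_nu _ (hF.Qiter_mem hh k)) ((integrable_const _).add
          (hF.int_nu G hG)) hpt
    _ = |mInt μ h| + ∫ x, G x ∂ν := by
        rw [integral_add (integrable_const _) (hF.int_nu G hG)]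
        simp

lemma _root_.ENNReal.ofReal_eq_iSup_ofReal_min (a : ℝ) :
    ENNReal.ofReal a = ⨆ M : ℕ, ENNReal.ofReal (min a M) :=
  le_antisymm (le_iSup_of_le ⌈a⌉₊ (by rw [min_eq_left (Nat.le_ceil a)]))
    (iSup_le fun _ => ENNReal.ofReal_le_ofReal (min_le_left _ _))

namespace IsBMC

variable {P : Kernel S (S × S)} [IsMarkovKernel P] {ν : Measure S} {m : Measure Ω}
  [IsProbabilityMeasure m] {X : List Bool → Ω → S}

omit [IsMarkovKernel P] in
lemma integrable_comp (hBMC : IsBMC P ν m X) {h : S → ℝ} (hm : Measurable h) {C : ℝ}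
    (hb : ∀ x, |h x| ≤ C) (i : List Bool) : Integrable (fun ω => h (X i ω)) m :=
  Integrable.of_bound (hm.comp (hBMC.meas i)).aestronglyMeasurable C
    (Eventually.of_forall fun _ => hb _)

lemma integral_children (hBMC : IsBMC P ν m X) {h : S → ℝ} (hm : Measurable h) {C : ℝ}
    (hb : ∀ x, |h x| ≤ C) {n : ℕ} {i : List Bool} (hi : i ∈ gen n) :
    ∫ ω, (h (X (i ++ [false]) ω) + h (X (i ++ [true]) ω)) ∂m = ∫ ω, 2 * Qop P h (X i ω) ∂m := by
  -- the branching property, applied to the product that is trivial off the vertex `i`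
  let G : List Bool → S → S × S → ℝ := fun j _x q => if j = i then h q.1 + h q.2 else 1
  have hGm : ∀ j, Measurable fun q : S × S × S => G j q.1 q.2 := fun j => by
    by_cases hj : j = i
    · simp only [G, hj, if_true]
      fun_prop
    · simp [G, hj]
  have hGb : ∀ j, ∃ C', ∀ x q, |G j x q| ≤ C' := fun j => ⟨2 * |C| + 1, fun x q => by
    by_cases hj : j = i
    · simp only [G, hj, if_true]
      linarith [abs_add_le (h q.1) (h q.2), hb q.1, hb q.2, le_abs_self C]
    · simp only [G, hj, if_false, abs_one]
      linarith [abs_nonneg C]⟩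
  have hbr := hBMC.branching n G hGm hGb
  simp only [G, Finset.prod_ite_eq' (gen n) i, hi, if_true] at hbr
  rw [← integral_condExp (show sigmaTree X n ≤ _ from (natFiltration X hBMC.meas).le n),
    integral_congr_ae hbr]
  refine integral_congr_ae (Eventually.of_forall fun ω => ?_)
  dsimp only
  rw [Finset.prod_eq_single_of_mem i hi fun j _ hj => by simp [hj]]
  simp only [if_true, Qop, ← integral_const_mul]
  congr 1 with q
  ring

lemma integral_sum_gen_succ (hBMC : IsBMC P ν m X) {h : S → ℝ} (hm : Measurable h) {C : ℝ}
    (hb : ∀ x, |h x| ≤ C) (n : ℕ) :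
    ∫ ω, ∑ j ∈ gen (n + 1), h (X j ω) ∂m = 2 * ∫ ω, ∑ i ∈ gen n, Qop P h (X i ω) ∂m := by
  have hint : ∀ i ∈ gen n,
      Integrable (fun ω => h (X (i ++ [false]) ω) + h (X (i ++ [true]) ω)) m := fun i _ =>
    (hBMC.integrable_comp hm hb _).add (hBMC.integrable_comp hm hb _)
  simp_rw [sum_gen_succ fun j => h (X j _)]
  rw [integral_finsetSum _ hint,
    integral_finsetSum _ fun i _ => hBMC.integrable_comp (measurable_Qop hm) (abs_Qop_le hb) i,
    Finset.mul_sum]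
  refine Finset.sum_congr rfl fun i hi => ?_
  rw [hBMC.integral_children hm hb hi, integral_const_mul]

lemma integral_sum_gen (hBMC : IsBMC P ν m X) {h : S → ℝ} (hm : Measurable h) {C : ℝ}
    (hb : ∀ x, |h x| ≤ C) (k : ℕ) :
    ∫ ω, ∑ i ∈ gen k, h (X i ω) ∂m = 2 ^ k * ∫ x, Qiter P k h x ∂ν := by
  induction k generalizing h with
  | zero =>
    simp only [gen_zero, sum_singleton, pow_zero, one_mul, Qiter, Function.iterate_zero, id_eq]
    rw [← hBMC.init, integral_map (hBMC.meas []).aemeasurable hm.aestronglyMeasurable]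
  | succ k ih =>
    rw [hBMC.integral_sum_gen_succ hm hb, ih (measurable_Qop hm) (abs_Qop_le hb)]
    simp only [Qiter, Function.iterate_succ_apply]
    ring

lemma sum_lintegral_gen_le [IsProbabilityMeasure ν] {F : Set (S → ℝ)} (hBMC : IsBMC P ν m X)
    (hF : AssumpF P ν F) {h : S → ℝ} (hh : h ∈ F) (hh0 : 0 ≤ h) (k : ℕ) :
    ∑ i ∈ gen k, ∫⁻ ω, ENNReal.ofReal (h (X i ω)) ∂m
      ≤ ENNReal.ofReal (2 ^ k * ∫ x, Qiter P k h x ∂ν) := by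
  -- the branching property only covers bounded functions: truncate at `M`, let `M → ∞`
  have hmM : ∀ M : ℕ, Measurable fun x => min (h x) M :=
    fun M => (hF.meas h hh).min measurable_const
  have hbM : ∀ (M : ℕ) x, |min (h x) M| ≤ M := fun M x => by
    rw [abs_of_nonneg (le_min (hh0 x) M.cast_nonneg)]
    exact min_le_right _ _
  have hmono : ∀ i, Monotone fun M : ℕ => ∫⁻ ω, ENNReal.ofReal (min (h (X i ω)) M) ∂m :=
    fun i M M' hMM' => lintegral_mono fun ω =>
      ENNReal.ofReal_le_ofReal (min_le_min le_rfl (Nat.cast_le.mpr hMM'))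
  have hsup : ∀ i, ∫⁻ ω, ENNReal.ofReal (h (X i ω)) ∂m
      = ⨆ M : ℕ, ∫⁻ ω, ENNReal.ofReal (min (h (X i ω)) M) ∂m := fun i => by
    simp_rw [ENNReal.ofReal_eq_iSup_ofReal_min (h (X i _))]
    exact lintegral_iSup (fun M => ((hmM M).comp (hBMC.meas i)).ennreal_ofReal)
      fun M M' hMM' ω => ENNReal.ofReal_le_ofReal (min_le_min le_rfl (Nat.cast_le.mpr hMM'))
  simp_rw [hsup]
  rw [ENNReal.finsetSum_iSup_of_monotone hmono]
  refine iSup_le fun M => ?_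
  have hint := fun i => hBMC.integrable_comp (hmM M) (hbM M) i
  have hnn : ∀ i ω, 0 ≤ min (h (X i ω)) M := fun i ω => le_min (hh0 _) M.cast_nonneg
  simp_rw [← ofReal_integral_eq_lintegral_ofReal (hint _) (Eventually.of_forall (hnn _))]
  rw [← ENNReal.ofReal_sum_of_nonneg fun i _ => integral_nonneg (hnn i),
    ← integral_finsetSum _ fun i _ => hint i, hBMC.integral_sum_gen (hmM M) (hbM M)]
  refine ENNReal.ofReal_le_ofReal (mul_le_mul_of_nonneg_left (integral_mono ?_ ?_ ?_) ?_)
  · exact Integrable.of_bound (measurable_Qiter (hmM M) k).aestronglyMeasurable M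
      (Eventually.of_forall (abs_Qiter_le (hbM M) k))
  · exact hF.int_nu _ (hF.Qiter_mem hh k)
  · exact hF.Qiter_le_Qiter (hmM M) (hbM M) hh (fun x => min_le_left _ _) k
  · positivity

lemma lintegral_sum_range_sum_gen_le [IsProbabilityMeasure ν] {F : Set (S → ℝ)}
    (hBMC : IsBMC P ν m X) (hF : AssumpF P ν F) {h : S → ℝ} (hh : h ∈ F) (hh0 : 0 ≤ h) {C : ℝ}
    (hC : ∀ k, ∫ x, Qiter P k h x ∂ν ≤ C) (K : ℕ) :
    ∫⁻ ω, ∑ k ∈ range K, ∑ i ∈ gen k, ENNReal.ofReal (h (X i ω)) ∂m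
      ≤ ENNReal.ofReal (2 ^ K * C) := by
  have hC0 : 0 ≤ C := (integral_nonneg hh0).trans (by simpa [Qiter] using hC 0)
  have hmeas : ∀ i, Measurable fun ω => ENNReal.ofReal (h (X i ω)) :=
    fun i => ((hF.meas h hh).comp (hBMC.meas i)).ennreal_ofReal
  rw [lintegral_finsetSum _ fun k _ => Finset.measurable_sum _ fun i _ => hmeas i]
  simp_rw [lintegral_finsetSum _ fun i _ => hmeas i]
  calc _ ≤ ∑ k ∈ range K, ENNReal.ofReal (2 ^ k * C) := sum_le_sum fun k _ =>
          (hBMC.sum_lintegral_gen_le hF hh hh0 k).trans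
            (ENNReal.ofReal_le_ofReal (mul_le_mul_of_nonneg_left (hC k) (by positivity)))
    _ = ENNReal.ofReal ((∑ k ∈ range K, (2 : ℝ) ^ k) * C) := by
          rw [sum_mul, ENNReal.ofReal_sum_of_nonneg fun k _ => by positivity]
    _ ≤ ENNReal.ofReal (2 ^ K * C) :=
          ENNReal.ofReal_le_ofReal (mul_le_mul_of_nonneg_right (sum_range_two_pow_le K) hC0)

lemma integral_sq_sum_MA_le [IsProbabilityMeasure ν] {F : Set (S → ℝ)} (hBMC : IsBMC P ν m X)
    (hF : AssumpF P ν F) {h : S → ℝ} (hh : h ∈ F) (hh0 : 0 ≤ h) {C : ℝ}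
    (hC : ∀ k, ∫ x, Qiter P k h x ∂ν ≤ C) (a : ℕ → S → ℝ) (ha : ∀ k, Measurable (a k))
    (hah : ∀ k x, a k x ^ 2 ≤ h x) (K : ℕ) :
    ∫ ω, (∑ k ∈ range K, MA X (gen k) (a k) ω) ^ 2 ∂m ≤ 4 ^ K * C := by
  have hC0 : 0 ≤ C := (integral_nonneg hh0).trans (by simpa [Qiter] using hC 0)
  have hpt : ∀ ω, (∑ k ∈ range K, MA X (gen k) (a k) ω) ^ 2
      ≤ 2 ^ K * ∑ k ∈ range K, ∑ i ∈ gen k, h (X i ω) := fun ω =>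
    (sq_sum_range_sum_gen_le (fun k i => a k (X i ω)) K).trans <|
      mul_le_mul_of_nonneg_left (sum_le_sum fun k _ => sum_le_sum fun i _ => hah _ _)
        (by positivity)
  have hlin : ∫⁻ ω, ENNReal.ofReal (2 ^ K * ∑ k ∈ range K, ∑ i ∈ gen k, h (X i ω)) ∂m
      ≤ ENNReal.ofReal (4 ^ K * C) := by
    simp_rw [ENNReal.ofReal_mul (by positivity : (0 : ℝ) ≤ 2 ^ K),
      ENNReal.ofReal_sum_of_nonneg fun k _ => sum_nonneg fun i _ => hh0 (X i _),
      ENNReal.ofReal_sum_of_nonneg fun i _ => hh0 (X i _)]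
    have hmeas : Measurable fun ω => ∑ k ∈ range K, ∑ i ∈ gen k, ENNReal.ofReal (h (X i ω)) :=
      Finset.measurable_sum _ fun k _ => Finset.measurable_sum _ fun i _ =>
        ((hF.meas h hh).comp (hBMC.meas i)).ennreal_ofReal
    rw [lintegral_const_mul _ hmeas]
    calc _ ≤ ENNReal.ofReal (2 ^ K) * ENNReal.ofReal (2 ^ K * C) := by
          gcongr
          exact hBMC.lintegral_sum_range_sum_gen_le hF hh hh0 hC K
      _ = ENNReal.ofReal (4 ^ K * C) := by
          rw [← ENNReal.ofReal_mul (by positivity), ← mul_assoc, ← mul_pow]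
          norm_num
  have hmeas : AEStronglyMeasurable (fun ω => (∑ k ∈ range K, MA X (gen k) (a k) ω) ^ 2) m :=
    ((Finset.measurable_sum _ fun k _ => Finset.measurable_sum _ fun i _ =>
      (ha k).comp (hBMC.meas i)).pow_const 2).aestronglyMeasurable
  rw [integral_eq_lintegral_of_nonneg_ae (ae_of_all _ fun ω => sq_nonneg _) hmeas]
  exact ENNReal.toReal_le_of_le_ofReal (by positivity)
    ((lintegral_mono fun ω => ENNReal.ofReal_le_ofReal (hpt ω)).trans hlin)

end IsBMC

lemma eventually_four_mul_sub_le {p : ℕ → ℕ}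
    (hp : Tendsto (fun n => (p n : ℝ) / n) atTop (𝓝 1)) : ∀ᶠ n in atTop, 4 * (n - p n) ≤ n := by
  filter_upwards [hp.eventually (eventually_ge_nhds (by norm_num : (3 / 4 : ℝ) < 1)),
    eventually_gt_atTop 0] with n hn hn0
  rw [le_div_iff₀ (by positivity)] at hn
  have : 3 * n ≤ 4 * p n := by exact_mod_cast (by linarith : (3 : ℝ) * n ≤ 4 * p n)
  omega

lemma four_pow_div_two_pow_le {K n : ℕ} (h : 4 * K ≤ n) : (4 : ℝ) ^ K / 2 ^ n ≤ (√2)⁻¹ ^ n := by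
  have hsq : (√2 : ℝ) ^ 2 = 2 := Real.sq_sqrt zero_le_two
  have h4 : (4 : ℝ) ^ K ≤ √2 ^ n := by
    rw [show (4 : ℝ) = √2 ^ 4 by rw [show 4 = 2 * 2 from rfl, pow_mul, hsq]; norm_num, ← pow_mul]
    exact pow_le_pow_right₀ Real.one_lt_sqrt_two.le h
  calc (4 : ℝ) ^ K / 2 ^ n ≤ √2 ^ n / (√2 ^ n) ^ 2 := by
        rw [← pow_mul, mul_comm, pow_mul, hsq]
        gcongr
    _ = (√2)⁻¹ ^ n := by rw [inv_pow]; field_simp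

lemma tendsto_four_pow_sub_div_two_pow {p : ℕ → ℕ}
    (hp : Tendsto (fun n => (p n : ℝ) / n) atTop (𝓝 1)) :
    Tendsto (fun n => (4 : ℝ) ^ (n - p n) / 2 ^ n) atTop (𝓝 0) :=
  squeeze_zero' (Eventually.of_forall fun n => by positivity)
    ((eventually_four_mul_sub_le hp).mono fun _ => four_pow_div_two_pow_le)
    (tendsto_pow_atTop_nhds_zero_of_lt_one (by positivity)
      (inv_lt_one_of_one_lt₀ Real.one_lt_sqrt_two))

theorem subcritical_R0_general
    {S : Type*} [MeasurableSpace S] {Ω : Type*} [MeasurableSpace Ω]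
    (P : Kernel S (S × S)) [IsMarkovKernel P]
    (ν : Measure S) [IsProbabilityMeasure ν]
    (m : Measure Ω) [IsProbabilityMeasure m]
    (X : List Bool → Ω → S) (hBMC : IsBMC P ν m X)
    (F : Set (S → ℝ)) (hF : AssumpF P ν F)
    (μ : Measure S) (α : ℝ) (hα0 : 0 < α) (hα1 : α < 1 / Real.sqrt 2)
    (hH2 : AssumpH2 P F μ α)
    (𝔣 : ℕ → S → ℝ) (h𝔣 : ∀ ℓ, 𝔣 ℓ ∈ F)
    (g : S → ℝ) (hg : g ∈ F) (hunif : UnifH2 P μ α 𝔣 g)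
    (p : ℕ → ℕ)
    (hp_ratio : Tendsto (fun n => (p n : ℝ) / n) atTop (𝓝 1)) :
    Tendsto (fun n => ∫ ω,
        ((Real.sqrt (2 ^ n))⁻¹ *
          ∑ k ∈ Finset.range (n - p n), MA X (gen k) (ctr μ (𝔣 (n - k))) ω) ^ 2 ∂m)
      atTop (𝓝 0) := by
  have hα_le_one : α ≤ 1 := by
    have := inv_lt_one_of_one_lt₀ Real.one_lt_sqrt_two
    rw [one_div] at hα1
    linarith
  have hg2 : (fun x => g x ^ 2) ∈ F := hF.sq_mem g hg
  obtain ⟨C, hC⟩ := hH2.exists_integral_Qiter_le hF hα0.le hα_le_one hg2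
  have hctr_sq : ∀ ℓ x, ctr μ (𝔣 ℓ) x ^ 2 ≤ g x ^ 2 := fun ℓ x =>
    sq_le_sq.mpr (by simpa [Qiter, ctr] using (hunif 0 ℓ x).2.trans (le_abs_self _))
  have hbound : ∀ n, ∫ ω, ((Real.sqrt (2 ^ n))⁻¹ *
      ∑ k ∈ range (n - p n), MA X (gen k) (ctr μ (𝔣 (n - k))) ω) ^ 2 ∂m
        ≤ 4 ^ (n - p n) / 2 ^ n * C := fun n => by
    simp_rw [mul_pow, inv_pow, Real.sq_sqrt (by positivity : (0 : ℝ) ≤ 2 ^ n)]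
    rw [integral_const_mul, div_mul_eq_mul_div, div_eq_inv_mul]
    exact mul_le_mul_of_nonneg_left (hBMC.integral_sq_sum_MA_le hF hg2 (fun x => sq_nonneg _) hC
      (fun k => ctr μ (𝔣 (n - k))) (fun k => (hF.meas _ (h𝔣 _)).sub_const _)
      (fun k => hctr_sq _) _) (by positivity)
  exact squeeze_zero (fun n => integral_nonneg fun ω => sq_nonneg _) hbound
    (by simpa using (tendsto_four_pow_sub_div_two_pow hp_ratio).mul_const C)

/-- **Lemma (sub-critical: the remainder `R₀` vanishes in `L²`).** -/
theorem subcritical_R0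
    {S : Type*} [MeasurableSpace S] {Ω : Type*} [MeasurableSpace Ω]
    (P : Kernel S (S × S)) [IsMarkovKernel P]
    (ν : Measure S) [IsProbabilityMeasure ν]
    (m : Measure Ω) [IsProbabilityMeasure m]
    (X : List Bool → Ω → S) (hBMC : IsBMC P ν m X)
    (F : Set (S → ℝ)) (hF : AssumpF P ν F)
    (μ : Measure S) (α : ℝ) (hα0 : 0 < α) (hα1 : α < 1 / Real.sqrt 2)
    (hH2 : AssumpH2 P F μ α)
    (𝔣 : ℕ → S → ℝ) (h𝔣 : ∀ ℓ, 𝔣 ℓ ∈ F)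
    (g : S → ℝ) (hg : g ∈ F) (hunif : UnifH2 P μ α 𝔣 g)
    (p : ℕ → ℕ) (hp_mono : Monotone p) (hp_pos : ∀ n, 1 ≤ p n)
    (hp_lt : ∀ᶠ n in atTop, p n < n)
    (hp_ratio : Tendsto (fun n => (p n : ℝ) / n) atTop (𝓝 1))
    (hp_log : ∀ lam : ℝ, 0 < lam →
      Tendsto (fun n : ℕ => (n : ℝ) - p n - lam * Real.log n) atTop atTop) :
    Tendsto (fun n => ∫ ω,
        ((Real.sqrt (2 ^ n))⁻¹ *
          ∑ k ∈ Finset.range (n - p n), MA X (gen k) (ctr μ (𝔣 (n - k))) ω) ^ 2 ∂m)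
      atTop (𝓝 0) :=
  subcritical_R0_general P ν m X hBMC F hF μ α hα0 hα1 hH2 𝔣 h𝔣 g hg hunif p hp_ratio

end BMC
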